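/- Let H_n(x,δ) be the deformed Hermite polynomials defined by H_{n+1} = 2x H_n - (2n+n(n-1)δ) H_{n-1}, H_{-1}=0, H_0=1. Then for all n ≥ 1, d/dx H_n(x,δ) = 2 ∑_{k=0}^{⌊(n-1)/2⌋} (2k)! · binom(n, 2k+1) · (-δ)^k · H_{n-1-2k}(x,δ). -/

import Mathlib

/-!
Write `b_j = 2j + j(j-1)δ` and `c(n,k) = (2k)! C(n,2k+1) (-δ)^k`. Differentiating the recurrence
gives `H_{n+2}' = 2 H_{n+1} + 2x H_{n+1}' - b_{n+1} H_n'`. Substituting the formula for `H_{n+1}'`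
and `H_n'` and expanding each `2x H_j = H_{j+1} + b_j H_{j-1}` reduces the induction step to
`c(n+2,k+1) = c(n+1,k+1) + c(n+1,k) b_{n-2k} - b_{n+1} c(n,k)`, which is Pascal's rule combined
with the absorption identities `(n+1) C(n,m) = (m+1) C(n+1,m+1) = (n+1-m) C(n+1,m)`.
-/

open Finset Polynomial

/-- Deformed Hermite polynomials `H_n(x,δ)` as polynomials over `ℝ`, defined by the
three-term recurrence `H_{n+1} = 2x H_n - (2n + n(n-1)δ) H_{n-1}`, `H_0 = 1`, `H_1 = 2x`. -/
noncomputable def deformedHermiteP (δ : ℝ) : ℕ → Polynomial ℝ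
  | 0 => 1
  | 1 => 2 * Polynomial.X
  | (n + 2) =>
      2 * Polynomial.X * deformedHermiteP δ (n + 1)
        - Polynomial.C (2 * ((n : ℝ) + 1) + ((n : ℝ) + 1) * (n : ℝ) * δ) *
            deformedHermiteP δ n

namespace DeformedHermite

variable (δ : ℝ)

def recCoeff (j : ℕ) : ℝ := 2 * j + j * (j - 1 : ℝ) * δ

def derivCoeff (n k : ℕ) : ℝ :=
  (Nat.factorial (2 * k) : ℝ) * (Nat.choose n (2 * k + 1) : ℝ) * (-δ) ^ k

theorem deformedHermiteP_add_two (n : ℕ) :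
    deformedHermiteP δ (n + 2) =
      2 * X * deformedHermiteP δ (n + 1) - C (recCoeff δ (n + 1)) * deformedHermiteP δ n := by
  rw [deformedHermiteP, recCoeff]
  push_cast
  ring_nf

theorem two_mul_X_mul_deformedHermiteP (j : ℕ) :
    2 * X * deformedHermiteP δ j =
      deformedHermiteP δ (j + 1) + C (recCoeff δ j) * deformedHermiteP δ (j - 1) := by
  cases j with
  | zero => simp [deformedHermiteP, recCoeff]
  | succ j => rw [deformedHermiteP_add_two, Nat.add_sub_cancel]; ring

theorem derivative_deformedHermiteP_add_two (n : ℕ) :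
    derivative (deformedHermiteP δ (n + 2)) =
      2 * deformedHermiteP δ (n + 1) + 2 * X * derivative (deformedHermiteP δ (n + 1))
        - C (recCoeff δ (n + 1)) * derivative (deformedHermiteP δ n) := by
  rw [deformedHermiteP_add_two]
  simp only [derivative_sub, derivative_mul, derivative_X, derivative_C, derivative_ofNat]
  ring

variable {δ}

theorem derivCoeff_eq_zero {n k : ℕ} (h : n ≤ 2 * k) : derivCoeff δ n k = 0 := by
  simp [derivCoeff, Nat.choose_eq_zero_of_lt (Nat.lt_succ_of_le h)]

theorem derivCoeff_zero_right (n : ℕ) : derivCoeff δ n 0 = n := by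
  simp [derivCoeff]

theorem derivCoeff_add_two_succ (n k : ℕ) :
    derivCoeff δ (n + 2) (k + 1) =
      derivCoeff δ (n + 1) (k + 1) + derivCoeff δ (n + 1) k * recCoeff δ (n - 2 * k)
        - recCoeff δ (n + 1) * derivCoeff δ n k := by
  rcases le_or_gt n (2 * k) with h | h
  · rw [derivCoeff_eq_zero (by omega), derivCoeff_eq_zero (by omega), derivCoeff_eq_zero h,
      Nat.sub_eq_zero_of_le h]
    simp [recCoeff]
  have pascal : (Nat.choose (n + 2) (2 * (k + 1) + 1) : ℝ) =
      Nat.choose (n + 1) (2 * k + 2) + Nat.choose (n + 1) (2 * (k + 1) + 1) := by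
    exact_mod_cast Nat.choose_succ_succ' (n + 1) (2 * k + 2)
  have absorb : ((n : ℝ) + 1) * Nat.choose n (2 * k + 1) =
      Nat.choose (n + 1) (2 * k + 2) * (2 * k + 2) := by
    exact_mod_cast Nat.add_one_mul_choose_eq n (2 * k + 1)
  have absorb' : (Nat.choose n (2 * k + 1) : ℝ) * (n + 1) =
      Nat.choose (n + 1) (2 * k + 1) * (n - 2 * k) := by
    have := Nat.choose_mul_succ_eq n (2 * k + 1)
    rw [show n + 1 - (2 * k + 1) = n - 2 * k by omega] at this
    have := congrArg (Nat.cast (R := ℝ)) this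
    push_cast [Nat.cast_sub h.le] at this
    exact this
  have fact : (Nat.factorial (2 * (k + 1)) : ℝ) =
      (2 * k + 2) * (2 * k + 1) * Nat.factorial (2 * k) := by
    rw [show 2 * (k + 1) = 2 * k + 1 + 1 by ring, Nat.factorial_succ, Nat.factorial_succ]
    push_cast; ring
  simp only [derivCoeff, recCoeff, fact, Nat.cast_sub h.le]
  push_cast
  linear_combination (Nat.factorial (2 * k) : ℝ) * (-δ) ^ k *
    ((2 * k + 2) * (2 * k + 1) * (-δ) * pascal + (2 + (n - 2 * k - 1) * δ) * absorb'
      + (2 * k + 1) * δ * absorb)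

theorem sum_range_derivCoeff_mul_eq_add {n N : ℕ} (hN : n ≤ 2 * N) (f : ℕ → ℝ[X]) :
    ∑ k ∈ range N, C (derivCoeff δ n k) * f k =
      C (derivCoeff δ n 0) * f 0 + ∑ k ∈ range N, C (derivCoeff δ n (k + 1)) * f (k + 1) := by
  rw [add_comm, ← sum_range_succ' (fun k => C (derivCoeff δ n k) * f k), sum_range_succ,
    derivCoeff_eq_zero hN, C_0, zero_mul, add_zero]

theorem C_derivCoeff_mul_two_mul_X_mul (n k : ℕ) :
    C (derivCoeff δ (n + 1) k) * (2 * X * deformedHermiteP δ (n - 2 * k)) =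
      C (derivCoeff δ (n + 1) k) * deformedHermiteP δ (n + 1 - 2 * k)
        + C (derivCoeff δ (n + 1) k * recCoeff δ (n - 2 * k)) *
            deformedHermiteP δ (n - 1 - 2 * k) := by
  rcases le_or_gt (2 * k) n with h | h
  · rw [two_mul_X_mul_deformedHermiteP, show n - 2 * k + 1 = n + 1 - 2 * k by omega,
      show n - 2 * k - 1 = n - 1 - 2 * k by omega, C_mul]
    ring
  · simp [derivCoeff_eq_zero (show n + 1 ≤ 2 * k by omega)]

/-- The cut-off `N` is arbitrary as long as `n ≤ 2 * N`: the coefficients vanish beyond it, which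
also hides the truncated subtraction in `n - 1 - 2 * k`. -/
noncomputable def derivSum (δ : ℝ) (n N : ℕ) : ℝ[X] :=
  ∑ k ∈ range N, C (derivCoeff δ n k) * deformedHermiteP δ (n - 1 - 2 * k)

theorem derivSum_add_two {n N : ℕ} (hN : n + 2 ≤ 2 * N) :
    derivSum δ (n + 2) N =
      deformedHermiteP δ (n + 1) + 2 * X * derivSum δ (n + 1) N
        - C (recCoeff δ (n + 1)) * derivSum δ n N := by
  have index (k : ℕ) : n + 2 - 1 - 2 * k = n + 1 - 2 * k := by omega
  have index' (k : ℕ) : n + 1 - 2 * (k + 1) = n - 1 - 2 * k := by omega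
  simp only [derivSum, index, Nat.add_sub_cancel, mul_sum, mul_left_comm (2 * X),
    C_derivCoeff_mul_two_mul_X_mul, sum_add_distrib]
  rw [sum_range_derivCoeff_mul_eq_add hN, sum_range_derivCoeff_mul_eq_add (by omega)]
  simp only [index', derivCoeff_add_two_succ, derivCoeff_zero_right, map_natCast, C_add, C_sub,
    C_mul, add_mul, sub_mul, mul_assoc, sum_add_distrib, sum_sub_distrib, mul_zero, Nat.sub_zero]
  push_cast
  ring

theorem derivative_deformedHermiteP_eq_derivSum (n : ℕ) :
    ∀ N, n ≤ 2 * N → derivative (deformedHermiteP δ n) = C 2 * derivSum δ n N := by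
  induction n using Nat.twoStepInduction with
  | zero => intro N _; simp [derivSum, deformedHermiteP, derivCoeff_eq_zero]
  | one =>
    intro N hN
    have vanish (k : ℕ) : derivCoeff δ 1 (k + 1) = 0 := derivCoeff_eq_zero (by omega)
    rw [derivSum, sum_range_derivCoeff_mul_eq_add hN]
    simpa [deformedHermiteP, derivCoeff_zero_right, vanish] using (map_ofNat C 2).symm
  | more n ih₀ ih₁ =>
    intro N hN
    rw [derivative_deformedHermiteP_add_two, ih₁ N (by omega), ih₀ N (by omega),
      derivSum_add_two hN, map_ofNat C 2]
    ring

end DeformedHermite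

theorem deformedHermite_derivative_general (δ : ℝ) (n : ℕ) :
    Polynomial.derivative (deformedHermiteP δ n)
      = Polynomial.C 2 * ∑ k ∈ Finset.range ((n - 1) / 2 + 1),
          Polynomial.C ((Nat.factorial (2 * k) : ℝ) * (Nat.choose n (2 * k + 1) : ℝ) *
              (-δ) ^ k) * deformedHermiteP δ (n - 1 - 2 * k) :=
  DeformedHermite.derivative_deformedHermiteP_eq_derivSum n _ (by omega)

theorem deformedHermite_derivative (δ : ℝ) (n : ℕ) (hn : 1 ≤ n) :
    Polynomial.derivative (deformedHermiteP δ n)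
      = Polynomial.C 2 * ∑ k ∈ Finset.range ((n - 1) / 2 + 1),
          Polynomial.C ((Nat.factorial (2 * k) : ℝ) * (Nat.choose n (2 * k + 1) : ℝ) *
              (-δ) ^ k) * deformedHermiteP δ (n - 1 - 2 * k) :=
  deformedHermite_derivative_general δ n
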